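/- arXiv:2410.24170 — 3 statements merged into one kernel-verified Lean document; each statement's English description precedes it below -/
import Mathlib

section
/- Assume the waiting times X_j, j ∈ ℕ, are mutually independent and X_j < ∞ almost surely for each j, and that for some α > 0 one has ∑_{j=1}^∞ E[e^{−α ∑_{i=1}^{j} X_i}] < 1. Then, almost surely, |𝒯_t| < ∞ for every t > 0; that is, the Crump–Mode–Jagers process is non-explosive. -/
/-!
Put `aᵢ = E[e^{-α(X₀ + ⋯ + Xᵢ)}]` and `c = ∑ᵢ aᵢ < 1`. Since
`B(i :: u) = B(u) + (X_{u,0} + ⋯ + X_{u,i})` and the waiting times at `u` are independent of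
`B(u)` and distributed like those at the root, `E[e^{-α B(u)}]` is the product of the `aᵢ` along
the address of `u`. Summing over all addresses gives `E[∑_u e^{-α B(u)}] = ∑ₙ cⁿ < ∞`, so
`W = ∑_u e^{-α B(u)}` is almost surely finite, and then only finitely many `u` can have
`e^{-α B(u)} ≥ e^{-α t}`, i.e. `B(u) ≤ t`.
-/

open MeasureTheory ProbabilityTheory Filter
open scoped ENNReal

namespace CMJ

/-- Ulam–Harris labels, encoded as *reversed* addresses: `i :: u` is the `(i+1)`-th child
of `u`, so the Lean child index `i : ℕ` corresponds to the paper's child index `i + 1`,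
and the Lean waiting time `X u j` corresponds to the paper's `X(u (j+1))`. -/
abbrev Node : Type := List ℕ

variable {Ω : Type*} [MeasurableSpace Ω]

/-- Birth times: `birth X [] = 0` and
`birth X (i :: u) = birth X u + ∑_{j=0}^{i} X u j`. -/
noncomputable def birth (X : Node → ℕ → Ω → ℝ≥0∞) : Node → Ω → ℝ≥0∞
  | [] => fun _ => 0
  | i :: u => fun ω => birth X u ω + ∑ j ∈ Finset.range (i + 1), X u j ω

/-- The population born before time `t`: `𝒯_t = {u : B(u) ≤ t}`. -/
def tree (X : Node → ℕ → Ω → ℝ≥0∞) (t : ℝ≥0∞) (ω : Ω) : Set Node :=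
  {u | birth X u ω ≤ t}

/-- `τ_k = inf {t ≥ 0 : |𝒯_t| ≥ k}`. -/
noncomputable def tau (X : Node → ℕ → Ω → ℝ≥0∞) (k : ℕ) (ω : Ω) : ℝ≥0∞ :=
  sInf {t : ℝ≥0∞ | (k : ℕ∞) ≤ (tree X t ω).encard}

/-- The `n`-th jump tree `𝒯_{τ_n}`. -/
noncomputable def jumpTree (X : Node → ℕ → Ω → ℝ≥0∞) (n : ℕ) (ω : Ω) : Set Node :=
  tree X (tau X n ω) ω

/-- Out-degree (number of children) of `u` in the tree `T`. -/
noncomputable def deg (T : Set Node) (u : Node) : ℕ∞ :=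
  {i : ℕ | i :: u ∈ T}.encard

open scoped Classical in
/-- Out-degree with the convention `outdeg(u,T) = -∞` (i.e. `⊥`) if `u ∉ T`. -/
noncomputable def degB (T : Set Node) (u : Node) : WithBot ℕ∞ :=
  if u ∈ T then (deg T u : WithBot ℕ∞) else ⊥

/-- `u` attains the maximal out-degree in `T` (this expresses
`outdeg(u,T) = max_{v ∈ T} outdeg(v,T)` with the convention `outdeg(u,T) = -∞`
for `u ∉ T`). -/
def IsMaxDeg (T : Set Node) (u : Node) : Prop :=
  u ∈ T ∧ ∀ v ∈ T, deg T v ≤ deg T u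

/-- `u` is a persistent hub of the tree sequence `T` if it attains the maximal
out-degree for all but finitely many `n`. -/
def IsPersistentHub (T : ℕ → Set Node) (u : Node) : Prop :=
  ∀ᶠ n in atTop, IsMaxDeg (T n) u

/-- `e^{-α x}`, with `e^{-α ∞} = 0` (not the `1` that `toReal ⊤ = 0` would give), so that it is
multiplicative on `[0, ∞]`. -/
noncomputable def expWeight (α : ℝ) (x : ℝ≥0∞) : ℝ≥0∞ :=
  if x = ⊤ then 0 else ENNReal.ofReal (Real.exp (-α * x.toReal))

@[fun_prop]
lemma measurable_expWeight (α : ℝ) : Measurable (expWeight α) :=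
  Measurable.ite (measurableSet_singleton ⊤) measurable_const (by fun_prop)

@[simp]
lemma expWeight_zero (α : ℝ) : expWeight α 0 = 1 := by
  simp [expWeight]

lemma expWeight_add (α : ℝ) (x y : ℝ≥0∞) :
    expWeight α (x + y) = expWeight α x * expWeight α y := by
  rcases eq_or_ne x ⊤ with rfl | hx
  · simp [expWeight]
  rcases eq_or_ne y ⊤ with rfl | hy
  · simp [expWeight]
  rw [expWeight, expWeight, expWeight, if_neg (ENNReal.add_ne_top.2 ⟨hx, hy⟩), if_neg hx,
    if_neg hy, ← ENNReal.ofReal_mul (Real.exp_nonneg _), ← Real.exp_add,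
    ENNReal.toReal_add hx hy, mul_add]

lemma expWeight_le_expWeight {α : ℝ} (hα : 0 ≤ α) {x t : ℝ≥0∞} (hxt : x ≤ t) (ht : t ≠ ⊤) :
    expWeight α t ≤ expWeight α x := by
  rw [expWeight, expWeight, if_neg ht, if_neg (ne_top_of_le_ne_top ht hxt)]
  refine ENNReal.ofReal_le_ofReal (Real.exp_le_exp.2 ?_)
  nlinarith [ENNReal.toReal_mono ht hxt]

lemma expWeight_le_ofReal (α : ℝ) (x : ℝ≥0∞) :
    expWeight α x ≤ ENNReal.ofReal (Real.exp (-α * x.toReal)) := by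
  unfold expWeight
  split_ifs
  exacts [zero_le, le_rfl]

lemma _root_.ENNReal.tsum_list_prod_map {β : Type*} (a : β → ℝ≥0∞) :
    ∑' l : List β, (l.map a).prod = (1 - ∑' b, a b)⁻¹ := by
  have generation : ∀ n, ∑' l : List β, (if l.length = n then (l.map a).prod else 0)
      = (∑' b, a b) ^ n := by
    intro n
    induction n with
    | zero =>
      rw [tsum_eq_single []] <;> simp +contextual
    | succ n ih =>
      have hcons : Function.Injective fun p : β × List β => p.1 :: p.2 :=
        fun (p q : β × List β) h => Prod.ext (List.cons.inj h).1 (List.cons.inj h).2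
      have hsupp : Function.support (fun l : List β =>
          if l.length = n + 1 then (l.map a).prod else 0) ⊆
          Set.range fun p : β × List β => p.1 :: p.2 := by
        rintro (_ | ⟨b, l⟩) h
        · simp at h
        · exact ⟨(b, l), rfl⟩
      calc ∑' l : List β, (if l.length = n + 1 then (l.map a).prod else 0)
          = ∑' p : β × List β, a p.1 * (if p.2.length = n then (p.2.map a).prod else 0) := by
            rw [← hcons.tsum_eq hsupp]
            refine tsum_congr fun p => ?_
            split_ifs <;> simp_all
        _ = (∑' b, a b) ^ (n + 1) := by
            refine (ENNReal.tsum_prod (f := fun b (l : List β) =>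
              a b * if l.length = n then (l.map a).prod else 0)).trans ?_
            simp_rw [ENNReal.tsum_mul_left, ih, ENNReal.tsum_mul_right, pow_succ']
  calc ∑' l : List β, (l.map a).prod
      = ∑' l : List β, ∑' n, (if l.length = n then (l.map a).prod else 0) := by
        refine tsum_congr fun l => ?_
        simp_rw [eq_comm (a := l.length)]
        exact (tsum_ite_eq l.length fun _ => (l.map a).prod).symm
    _ = ∑' n, (∑' b, a b) ^ n := by rw [ENNReal.tsum_comm]; exact tsum_congr generation
    _ = (1 - ∑' b, a b)⁻¹ := ENNReal.tsum_geometric _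

lemma measurable_birth {X : Node → ℕ → Ω → ℝ≥0∞} (hmeas : ∀ u j, Measurable (X u j))
    (u : Node) : Measurable (birth X u) := by
  induction u with
  | nil => exact measurable_const
  | cons i u ih => exact ih.add (Finset.measurable_sum _ fun j _ => hmeas u j)

/-- Taking for the sample space the space of configurations exhibits `birth X u` as a
function of the waiting times. -/
lemma birth_eq_birth_coord {S : Type*} (X : Node → ℕ → S → ℝ≥0∞) (u : Node) (s : S) :
    birth X u s = birth (fun w j (Y : Node → ℕ → ℝ≥0∞) => Y w j) u (fun w j => X w j s) := by
  induction u with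
  | nil => rfl
  | cons i u ih => simp [birth, ih]

lemma birth_coord_congr {u : Node} {Y Z : Node → ℕ → ℝ≥0∞}
    (h : ∀ w ∈ u.tails.tail, Y w = Z w) :
    birth (fun w j (Y : Node → ℕ → ℝ≥0∞) => Y w j) u Y
      = birth (fun w j (Y : Node → ℕ → ℝ≥0∞) => Y w j) u Z := by
  induction u with
  | nil => rfl
  | cons i u ih =>
    have hu : u ∈ u.tails := (List.mem_tails u u).2 (List.suffix_refl u)
    simp only [birth, List.tails, List.tail_cons] at h ⊢
    rw [ih fun w hw => h w (List.mem_of_mem_tail hw), h u hu]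

lemma notMem_tail_tails (u : Node) : u ∉ u.tails.tail := by
  cases u with
  | nil => simp
  | cons i u => simpa [List.mem_tails] using fun h : i :: u <:+ u => by simpa using h.length_le

section Independence

variable {P : Measure Ω} {X : Node → ℕ → Ω → ℝ≥0∞}

/-- `birth X u` only involves the waiting times at the strict ancestors `u.tails.tail` of `u`. -/
lemma indepFun_birth (hmeas : ∀ u j, Measurable (X u j))
    (hindep : iIndepFun (fun u ω (j : ℕ) => X u j ω) P) (u : Node) :
    IndepFun (birth X u) (fun ω j => X u j ω) P := by
  set D := u.tails.tail.toFinset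
  have hD : Disjoint D {u} :=
    Finset.disjoint_singleton_right.2 (by simpa [D] using notMem_tail_tails u)
  have hseq : ∀ w, Measurable fun ω (j : ℕ) => X w j ω := fun w => measurable_pi_lambda _ (hmeas w)
  let G : (D → ℕ → ℝ≥0∞) → ℝ≥0∞ := fun f =>
    birth (fun w j (Y : Node → ℕ → ℝ≥0∞) => Y w j) u fun w => if h : w ∈ D then f ⟨w, h⟩ else 0
  have hG : Measurable G :=
    (measurable_birth (fun w j => by fun_prop) u).comp
      (measurable_pi_lambda _ fun w => by split <;> fun_prop)
  have hGX : (G ∘ fun ω (w : D) j => X w j ω) = birth X u := by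
    funext ω
    rw [Function.comp_apply, birth_eq_birth_coord]
    exact birth_coord_congr fun w hw => by simp [D, hw]
  have key := (hindep.indepFun_finset D {u} hD hseq).comp hG
    (measurable_pi_apply ⟨u, Finset.mem_singleton_self u⟩)
  rwa [hGX] at key

lemma lintegral_expWeight_birth_cons (hmeas : ∀ u j, Measurable (X u j))
    (hindep : iIndepFun (fun u ω (j : ℕ) => X u j ω) P)
    (hident : ∀ u : Node,
      Measure.map (fun ω (j : ℕ) => X u j ω) P = Measure.map (fun ω (j : ℕ) => X [] j ω) P)
    (α : ℝ) (u : Node) (i : ℕ) :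
    ∫⁻ ω, expWeight α (birth X (i :: u) ω) ∂P
      = (∫⁻ ω, expWeight α (birth X u ω) ∂P)
        * ∫⁻ ω, expWeight α (∑ j ∈ Finset.range (i + 1), X [] j ω) ∂P := by
  have hseq : ∀ w, Measurable fun ω (j : ℕ) => X w j ω := fun w => measurable_pi_lambda _ (hmeas w)
  let g : (ℕ → ℝ≥0∞) → ℝ≥0∞ := fun v => expWeight α (∑ j ∈ Finset.range (i + 1), v j)
  have hg : Measurable g := by fun_prop
  have hweights : IndepFun (fun ω => expWeight α (birth X u ω)) (fun ω => g fun j => X u j ω) P :=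
    (indepFun_birth hmeas hindep u).comp (measurable_expWeight α) hg
  have hsame_law : ∫⁻ ω, g (fun j => X u j ω) ∂P = ∫⁻ ω, g (fun j => X [] j ω) ∂P := by
    rw [← lintegral_map hg (hseq u), hident u, lintegral_map hg (hseq [])]
  calc ∫⁻ ω, expWeight α (birth X (i :: u) ω) ∂P
      = ∫⁻ ω, expWeight α (birth X u ω) * g (fun j => X u j ω) ∂P := by
        simp only [birth, expWeight_add]; rfl
    _ = (∫⁻ ω, expWeight α (birth X u ω) ∂P) * ∫⁻ ω, g (fun j => X u j ω) ∂P :=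
        lintegral_mul_eq_lintegral_mul_lintegral_of_indepFun''
          ((measurable_expWeight α).comp (measurable_birth hmeas u)).aemeasurable
          (hg.comp (hseq u)).aemeasurable hweights
    _ = _ := by rw [hsame_law]

lemma lintegral_expWeight_birth [IsProbabilityMeasure P] (hmeas : ∀ u j, Measurable (X u j))
    (hindep : iIndepFun (fun u ω (j : ℕ) => X u j ω) P)
    (hident : ∀ u : Node,
      Measure.map (fun ω (j : ℕ) => X u j ω) P = Measure.map (fun ω (j : ℕ) => X [] j ω) P)
    (α : ℝ) (u : Node) :
    ∫⁻ ω, expWeight α (birth X u ω) ∂P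
      = (u.map fun i => ∫⁻ ω, expWeight α (∑ j ∈ Finset.range (i + 1), X [] j ω) ∂P).prod := by
  induction u with
  | nil => simp [birth]
  | cons i u ih =>
    rw [lintegral_expWeight_birth_cons hmeas hindep hident, ih, List.map_cons, List.prod_cons,
      mul_comm]

end Independence

lemma expWeight_ne_zero (α : ℝ) {t : ℝ≥0∞} (ht : t ≠ ⊤) : expWeight α t ≠ 0 := by
  simp [expWeight, ht, Real.exp_pos]

lemma finite_tree_of_tsum_expWeight_ne_top {S : Type*} {X : Node → ℕ → S → ℝ≥0∞} {s : S}
    {α : ℝ} (hα : 0 ≤ α) (hW : ∑' u, expWeight α (birth X u s) ≠ ⊤) {t : ℝ≥0∞} (ht : t ≠ ⊤) :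
    (tree X t s).Finite :=
  (ENNReal.finite_const_le_of_tsum_ne_top hW (expWeight_ne_zero α ht)).subset
    fun _ hu => expWeight_le_expWeight hα hu ht

theorem nonexplosive_general
    (P : Measure Ω) [IsProbabilityMeasure P]
    (X : Node → ℕ → Ω → ℝ≥0∞)
    (hmeas : ∀ u j, Measurable (X u j))
    -- the sequences `(X(u ·))_u` are i.i.d. across nodes
    (hnodes_indep : iIndepFun
      (fun u ω (j : ℕ) => X u j ω) P)
    (hnodes_ident : ∀ u : Node,
      Measure.map (fun ω (j : ℕ) => X u j ω) P = Measure.map (fun ω (j : ℕ) => X [] j ω) P)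
    (α : ℝ) (hα : 0 < α)
    -- `∑_{j=1}^∞ E[e^{-α ∑_{i=1}^j X_i}] < 1`
    (hlap : ∑' j : ℕ, ∫⁻ ω, ENNReal.ofReal
        (Real.exp (-α * (∑ i ∈ Finset.range (j + 1), X [] i ω).toReal)) ∂P < 1) :
    ∀ᵐ ω ∂P, ∀ t : ℝ≥0∞, 0 < t → t < ⊤ → (tree X t ω).Finite := by
  have hweight : ∀ u, Measurable fun ω => expWeight α (birth X u ω) :=
    fun u => (measurable_expWeight α).comp (measurable_birth hmeas u)
  have hc : ∑' i : ℕ, ∫⁻ ω, expWeight α (∑ j ∈ Finset.range (i + 1), X [] j ω) ∂P < 1 :=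
    (ENNReal.tsum_le_tsum fun _ => lintegral_mono fun _ => expWeight_le_ofReal α _).trans_lt hlap
  have hmean : ∫⁻ ω, ∑' u, expWeight α (birth X u ω) ∂P ≠ ⊤ := by
    rw [lintegral_tsum fun u => (hweight u).aemeasurable,
      tsum_congr (lintegral_expWeight_birth hmeas hnodes_indep hnodes_ident α),
      ENNReal.tsum_list_prod_map]
    exact ENNReal.inv_ne_top.2 (tsub_pos_of_lt hc).ne'
  filter_upwards [ae_lt_top (Measurable.tsum hweight) hmean] with ω hW t _ ht
  exact finite_tree_of_tsum_expWeight_ne_top hα.le hW.ne ht.ne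

/-- if the waiting times are mutually independent and almost surely finite,
and `∑_{j=1}^∞ E[e^{-α ∑_{i=1}^j X_i}] < 1` for some `α > 0`, then almost surely
`|𝒯_t| < ∞` for every finite `t > 0`: the CMJ process is non-explosive. -/
theorem nonexplosive
    (P : Measure Ω) [IsProbabilityMeasure P]
    (X : Node → ℕ → Ω → ℝ≥0∞)
    (hmeas : ∀ u j, Measurable (X u j))
    -- the sequences `(X(u ·))_u` are i.i.d. across nodes
    (hnodes_indep : iIndepFun
      (fun u ω (j : ℕ) => X u j ω) P)
    (hnodes_ident : ∀ u : Node,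
      Measure.map (fun ω (j : ℕ) => X u j ω) P = Measure.map (fun ω (j : ℕ) => X [] j ω) P)
    -- the waiting times `X_j` are mutually independent
    (hA1 : iIndepFun (fun j => X [] j) P)
    -- `X_j < ∞` almost surely
    (hA2 : ∀ j : ℕ, ∀ᵐ ω ∂P, X [] j ω < ⊤)
    (α : ℝ) (hα : 0 < α)
    -- `∑_{j=1}^∞ E[e^{-α ∑_{i=1}^j X_i}] < 1`
    (hlap : ∑' j : ℕ, ∫⁻ ω, ENNReal.ofReal
        (Real.exp (-α * (∑ i ∈ Finset.range (j + 1), X [] i ω).toReal)) ∂P < 1) :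
    ∀ᵐ ω ∂P, ∀ t : ℝ≥0∞, 0 < t → t < ⊤ → (tree X t ω).Finite :=
  nonexplosive_general P X hmeas hnodes_indep hnodes_ident α hα hlap

end CMJ
end

section
/- Suppose Assumption A holds. Then, almost surely, lim_{n→∞} max_{u ∈ 𝒯_{τ_n}} outdeg(u, 𝒯_{τ_n}) = ∞; that is, the maximal out-degree in the sequence of trees (𝒯_{τ_n})_{n∈ℕ₀} tends to infinity. -/
/-!
If the maximal out-degree stayed below `m` forever, every node ever born would have all its
child indices below `m`. The `(m+1)`-st child of the root, born at a finite time, would then never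
appear, so all `τ_n` would be bounded by some `C`; as `|𝒯_{τ_n}| ≥ n`, the trees `𝒯_{τ_n}` would
contain arbitrarily long lines of descent with child indices `< m`, all born before `C`.

This has probability zero. By Assumption A (iii) there is `δ > 0` with
`μ := ∑_{j<m} P(X_1 + ⋯ + X_{j+1} ≤ δ) < 1`. A line of descent of length `n + R` born before
`C < R δ` has at most `R` generation gaps exceeding `δ`; by independence along the line and a
union bound over lines and over the positions of the short gaps, such a line exists with
probability at most `C(n+R, R) μ^n m^R → 0`.
-/

open MeasureTheory ProbabilityTheory Filter
open scoped ENNReal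

namespace CMJ

variable {Ω : Type*} [MeasurableSpace Ω]

lemma exists_subset_card_eq_forall_le_of_sum_le {ι : Type*} {s : Finset ι} {g : ι → ℝ≥0∞}
    {C δ : ℝ≥0∞} {R : ℕ} (hsum : ∑ l ∈ s, g l ≤ C) (hC : C < R * δ) :
    ∃ T ⊆ s, T.card = s.card - R ∧ ∀ l ∈ T, g l ≤ δ := by
  classical
  have hbig : (s.filter fun l => δ < g l).card < R := by
    by_contra! h
    have := calc (R : ℝ≥0∞) * δ ≤ (s.filter fun l => δ < g l).card * δ := by gcongr
      _ ≤ ∑ l ∈ s.filter fun l => δ < g l, g l := by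
        rw [← nsmul_eq_mul]
        exact Finset.card_nsmul_le_sum _ _ _ fun l hl => (Finset.mem_filter.1 hl).2.le
      _ ≤ C := (Finset.sum_le_sum_of_subset (Finset.filter_subset _ _)).trans hsum
    exact (hC.trans_le this).false
  have hsmall := Finset.card_filter_add_card_filter_not (s := s) fun l => g l ≤ δ
  simp only [not_le] at hsmall
  obtain ⟨T, hTs, hT⟩ := Finset.exists_subset_card_eq
    (show s.card - R ≤ (s.filter fun l => g l ≤ δ).card by omega)
  exact ⟨T, hTs.trans (Finset.filter_subset _ _), hT, fun l hl => (Finset.mem_filter.1 (hTs hl)).2⟩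

lemma sum_prod_comp_eq_pow_mul_pow {ι κ R : Type*} [Fintype ι] [DecidableEq ι] [Fintype κ]
    [CommSemiring R] (T : Finset ι) (a : κ → R) :
    ∑ p : ι → κ, ∏ l ∈ T, a (p l) =
      (∑ j, a j) ^ T.card * Fintype.card κ ^ (Fintype.card ι - T.card) :=
  calc ∑ p : ι → κ, ∏ l ∈ T, a (p l) = ∑ p : ι → κ, ∏ l, if l ∈ T then a (p l) else 1 := by
        simp [Finset.prod_ite_mem]
    _ = ∏ l, ∑ j, if l ∈ T then a j else 1 :=
        (Fintype.prod_sum fun l (j : κ) => if l ∈ T then a j else 1).symm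
    _ = ∏ l, if l ∈ T then ∑ j, a j else (Fintype.card κ : R) :=
        Finset.prod_congr rfl fun l _ => by split_ifs <;> simp
    _ = _ := by
      rw [Finset.prod_ite, Finset.prod_const, Finset.prod_const, Finset.filter_mem_eq_inter,
        Finset.univ_inter, Finset.filter_notMem_eq_sdiff, Finset.card_univ_sdiff]

open scoped Topology NNReal in
lemma tendsto_choose_mul_pow_of_lt_one (R : ℕ) {μ : ℝ≥0∞} (hμ : μ < 1) :
    Tendsto (fun n => ((n + R).choose R : ℝ≥0∞) * μ ^ n) atTop (𝓝 0) := by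
  lift μ to ℝ≥0 using hμ.ne_top
  have hμ' : ‖(μ : ℝ)‖ < 1 := by simpa using hμ
  simpa [ENNReal.ofReal_mul, ENNReal.ofReal_pow] using ENNReal.tendsto_ofReal
    (summable_choose_mul_geometric_of_norm_lt_one R hμ').tendsto_atTop_zero

section Genealogy

omit [MeasurableSpace Ω]

variable {X : Node → ℕ → Ω → ℝ≥0∞} {ω : Ω} {s t : ℝ≥0∞}

noncomputable def birthGap (X : Node → ℕ → Ω → ℝ≥0∞) (u : Node) (i : ℕ) (ω : Ω) : ℝ≥0∞ :=
  ∑ j ∈ Finset.range (i + 1), X u j ω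

lemma birth_cons (i : ℕ) (u : Node) : birth X (i :: u) ω = birth X u ω + birthGap X u i ω :=
  rfl

lemma birth_le_birth_cons (i : ℕ) (u : Node) : birth X u ω ≤ birth X (i :: u) ω :=
  le_self_add

lemma birthGap_mono (u : Node) : Monotone fun i => birthGap X u i ω :=
  fun _ _ hij => Finset.sum_le_sum_of_subset (Finset.range_subset_range.2 (by omega))

lemma birth_cons_mono {i j : ℕ} (hij : i ≤ j) (u : Node) :
    birth X (i :: u) ω ≤ birth X (j :: u) ω :=
  add_le_add le_rfl (birthGap_mono u hij)

lemma birth_ofFn {k : ℕ} (p : Fin k → ℕ) :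
    birth X (List.ofFn p) ω = ∑ l : Fin k, birthGap X ((List.ofFn p).drop (l + 1)) (p l) ω := by
  induction k with
  | zero => rfl
  | succ k ih =>
    rw [List.ofFn_succ, birth_cons, ih, Fin.sum_univ_succ, add_comm]
    simp

lemma tree_mono (hst : s ≤ t) : tree X s ω ⊆ tree X t ω :=
  fun _ hu => hu.trans hst

lemma tree_top : tree X ⊤ ω = Set.univ :=
  Set.eq_univ_of_forall fun u => show birth X u ω ≤ ⊤ from le_top

lemma mem_tree_of_cons_mem {i : ℕ} {u : Node} (h : i :: u ∈ tree X t ω) : u ∈ tree X t ω :=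
  (birth_le_birth_cons i u).trans h

lemma cons_mem_tree_of_le {i j : ℕ} {u : Node} (hij : i ≤ j) (h : j :: u ∈ tree X t ω) :
    i :: u ∈ tree X t ω :=
  (birth_cons_mono hij u).trans h

lemma drop_mem_tree {u : Node} (hu : u ∈ tree X t ω) (d : ℕ) : u.drop d ∈ tree X t ω := by
  induction u generalizing d with
  | nil => simpa using hu
  | cons i u ih =>
    cases d with
    | zero => exact hu
    | succ d => exact ih (mem_tree_of_cons_mem hu) d

noncomputable def maxDeg (T : Set Node) : ℕ∞ :=
  ⨆ u ∈ T, deg T u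

lemma deg_mono {T T' : Set Node} (h : T ⊆ T') (u : Node) : deg T u ≤ deg T' u :=
  Set.encard_mono fun _ hi => h hi

lemma deg_le_maxDeg {T : Set Node} {u : Node} (hu : u ∈ T) : deg T u ≤ maxDeg T :=
  le_iSup₂ (f := fun v _ => deg T v) u hu

lemma maxDeg_mono {T T' : Set Node} (h : T ⊆ T') : maxDeg T ≤ maxDeg T' :=
  iSup₂_le fun u hu => (deg_mono h u).trans (deg_le_maxDeg (h hu))

lemma lt_deg_of_cons_mem_tree {i : ℕ} {u : Node} (h : i :: u ∈ tree X t ω) :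
    (i : ℕ∞) < deg (tree X t ω) u :=
  calc (i : ℕ∞) < (Set.Iic i).encard := by
        rw [← Finset.coe_Iic, Set.encard_coe_eq_coe_finsetCard, Nat.card_Iic]
        norm_cast
        omega
    _ ≤ deg (tree X t ω) u := Set.encard_mono fun _ hj => cons_mem_tree_of_le hj h

lemma lt_maxDeg_of_mem_tree {u : Node} (hu : u ∈ tree X t ω) {i : ℕ} (hi : i ∈ u) :
    (i : ℕ∞) < maxDeg (tree X t ω) := by
  induction u with
  | nil => cases hi
  | cons a v ih =>
    have hv := mem_tree_of_cons_mem hu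
    rcases List.mem_cons.1 hi with rfl | hi
    · exact (lt_deg_of_cons_mem_tree hu).trans_le (deg_le_maxDeg hv)
    · exact ih hv hi

lemma tau_mono : Monotone fun n => tau X n ω :=
  fun a b hab => sInf_le_sInf fun _ (ht : (b : ℕ∞) ≤ _) => le_trans (by exact_mod_cast hab) ht

lemma jumpTree_mono : Monotone fun n => jumpTree X n ω :=
  fun _ _ hab => tree_mono (tau_mono hab)

lemma le_encard_tree_of_tau_lt {n : ℕ} (h : tau X n ω < t) :
    (n : ℕ∞) ≤ (tree X t ω).encard := by
  obtain ⟨s, hs, hst⟩ := sInf_lt_iff.1 h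
  exact hs.trans (Set.encard_mono (tree_mono hst.le))

lemma exists_gt_tree_subset_of_finite (hs : s ≠ ⊤) (hfin : (tree X s ω).Finite) :
    ∃ t, s < t ∧ tree X t ω ⊆ tree X s ω := by
  classical
  obtain ⟨N, hN⟩ := (hfin.image List.headI).bddAbove
  have hout (u : Node) : (N + 1) :: u ∉ tree X s ω := fun hu => by
    simpa using hN ⟨_, hu, rfl⟩
  -- each member of `𝒯_s` has a first child born after `s`, among its first `N + 2` children
  set F := (hfin.toFinset ×ˢ Finset.range (N + 2)).filter
    fun p : Node × ℕ => p.2 :: p.1 ∉ tree X s ω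
  obtain ⟨t, hst, htF⟩ := exists_between (show s < F.inf fun p => birth X (p.2 :: p.1) ω from
    (Finset.lt_inf_iff hs.lt_top).2 fun p hp => not_le.1 (Finset.mem_filter.1 hp).2)
  refine ⟨t, hst, fun u hu => ?_⟩
  induction u with
  | nil => exact (zero_le : (0 : ℝ≥0∞) ≤ s)
  | cons i v ih =>
    have hv := ih (mem_tree_of_cons_mem hu)
    by_contra hiv
    have hj : min i (N + 1) :: v ∉ tree X s ω := by
      rcases min_choice i (N + 1) with h | h <;> rw [h]
      exacts [hiv, hout v]
    have hF : (v, min i (N + 1)) ∈ F := by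
      simp only [F, Finset.mem_filter, Finset.mem_product, Set.Finite.mem_toFinset,
        Finset.mem_range]
      exact ⟨⟨hv, by omega⟩, hj⟩
    exact (htF.trans_le ((Finset.inf_le hF).trans
      ((birth_cons_mono (min_le_left _ _) v).trans hu))).false

lemma le_encard_jumpTree (n : ℕ) : (n : ℕ∞) ≤ (jumpTree X n ω).encard := by
  by_cases hfin : (jumpTree X n ω).Finite
  · have htop : tau X n ω ≠ ⊤ := fun h =>
      Set.infinite_univ (by rwa [jumpTree, h, tree_top] at hfin)
    obtain ⟨t, ht, hsub⟩ := exists_gt_tree_subset_of_finite htop hfin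
    exact (le_encard_tree_of_tau_lt ht).trans (Set.encard_mono hsub)
  · simp [Set.Infinite.encard_eq hfin]

lemma finite_setOf_length_lt_forall_lt (k m : ℕ) :
    {u : Node | u.length < k ∧ ∀ i ∈ u, i < m}.Finite := by
  refine ((List.finite_length_lt (Fin m) k).image (List.map Fin.val)).subset ?_
  rintro u ⟨hk, hm⟩
  exact ⟨List.ofFn fun l : Fin u.length => ⟨u[l], hm _ (List.getElem_mem _)⟩, by simpa using hk,
    by simp [List.map_ofFn, Function.comp_def]⟩

lemma eventually_le_maxDeg_jumpTree {m : ℕ} (hroot : birth X [m] ω ≠ ⊤)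
    (hpath : ∀ C : ℕ, ∃ k, ∀ u : Node, u.length = k → (∀ i ∈ u, i < m) →
      (C : ℝ≥0∞) < birth X u ω) :
    ∀ᶠ n in atTop, (m : ℕ∞) ≤ maxDeg (jumpTree X n ω) := by
  suffices ∃ N, (m : ℕ∞) ≤ maxDeg (jumpTree X N ω) by
    obtain ⟨N, hN⟩ := this
    exact eventually_atTop.2 ⟨N, fun n hn => hN.trans (maxDeg_mono (jumpTree_mono hn))⟩
  by_contra! hsmall
  have hlt (n : ℕ) (u : Node) (hu : u ∈ jumpTree X n ω) : ∀ i ∈ u, i < m := fun i hi => by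
    exact_mod_cast (lt_maxDeg_of_mem_tree hu hi).trans (hsmall n)
  have hbirth (n : ℕ) (u : Node) (hu : u ∈ jumpTree X n ω) : birth X u ω < birth X [m] ω :=
    hu.trans_lt (not_le.1 fun h => (hlt n [m] h m (List.mem_singleton_self m)).false)
  obtain ⟨C, hC⟩ := ENNReal.exists_nat_gt hroot
  obtain ⟨k, hk⟩ := hpath C
  have hshort := finite_setOf_length_lt_forall_lt k m
  obtain ⟨u, hu, hlong⟩ : ∃ u ∈ jumpTree X (hshort.toFinset.card + 1) ω, k ≤ u.length := by
    by_contra! h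
    have hsub : jumpTree X _ ω ⊆ {u : Node | u.length < k ∧ ∀ i ∈ u, i < m} :=
      fun u hu => ⟨h u hu, hlt _ u hu⟩
    have := (le_encard_jumpTree _).trans (Set.encard_mono hsub)
    rw [hshort.encard_eq_coe_toFinset_card] at this
    norm_cast at this
    omega
  have hv := drop_mem_tree hu (u.length - k)
  exact (hk _ (by simp; omega) (hlt _ _ hv)).not_ge ((hbirth _ _ hv).le.trans hC.le)

end Genealogy

section Probability

open scoped Topology

variable {X : Node → ℕ → Ω → ℝ≥0∞} {P : Measure Ω}

lemma measurable_sum_range_apply (i : ℕ) :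
    Measurable fun x : ℕ → ℝ≥0∞ => ∑ j ∈ Finset.range (i + 1), x j :=
  Finset.measurable_sum _ fun j _ => measurable_pi_apply j

lemma measurable_birthGap (hmeas : ∀ u j, Measurable (X u j)) (u : Node) (i : ℕ) :
    Measurable (birthGap X u i) :=
  Finset.measurable_sum _ fun j _ => hmeas u j

lemma measure_birthGap_le_eq (hmeas : ∀ u j, Measurable (X u j))
    (hnodes_ident : ∀ u : Node,
      Measure.map (fun ω (j : ℕ) => X u j ω) P = Measure.map (fun ω (j : ℕ) => X [] j ω) P)
    (u : Node) (i : ℕ) (δ : ℝ≥0∞) :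
    P {ω | birthGap X u i ω ≤ δ} = P {ω | birthGap X [] i ω ≤ δ} := by
  have hset : MeasurableSet {x : ℕ → ℝ≥0∞ | ∑ j ∈ Finset.range (i + 1), x j ≤ δ} :=
    measurableSet_le (measurable_sum_range_apply i) measurable_const
  have hmap (v : Node) : P {ω | birthGap X v i ω ≤ δ} =
      P.map (fun ω j => X v j ω) {x | ∑ j ∈ Finset.range (i + 1), x j ≤ δ} :=
    (Measure.map_apply (measurable_pi_lambda _ (hmeas v)) hset).symm
  rw [hmap, hmap, hnodes_ident]

lemma measure_biInter_birthGap_le {ι : Type*} (hmeas : ∀ u j, Measurable (X u j))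
    (hnodes_indep : iIndepFun (fun u ω (j : ℕ) => X u j ω) P)
    (hnodes_ident : ∀ u : Node,
      Measure.map (fun ω (j : ℕ) => X u j ω) P = Measure.map (fun ω (j : ℕ) => X [] j ω) P)
    {v : ι → Node} (hv : Function.Injective v) (a : ι → ℕ) (T : Finset ι) (δ : ℝ≥0∞) :
    P (⋂ l ∈ T, {ω | birthGap X (v l) (a l) ω ≤ δ}) =
      ∏ l ∈ T, P {ω | birthGap X [] (a l) ω ≤ δ} := by
  have hindep : iIndepFun (fun l => birthGap X (v l) (a l)) P :=
    (hnodes_indep.precomp hv).comp _ fun l => measurable_sum_range_apply (a l)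
  exact (hindep.measure_inter_preimage_eq_mul T (sets := fun _ => Set.Iic δ)
    fun _ _ => measurableSet_Iic).trans
      (Finset.prod_congr rfl fun l _ => measure_birthGap_le_eq hmeas hnodes_ident _ _ δ)

lemma measure_birthGap_eq_zero (hA1 : iIndepFun (fun j => X [] j) P) (i : ℕ) :
    P {ω | birthGap X [] i ω = 0} = ∏ j ∈ Finset.range (i + 1), P {ω | X [] j ω = 0} := by
  have hset : {ω | birthGap X [] i ω = 0} = ⋂ j ∈ Finset.range (i + 1), X [] j ⁻¹' {0} := by
    ext ω
    simp [birthGap, Finset.sum_eq_zero_iff]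
  rw [hset, hA1.measure_inter_preimage_eq_mul _ fun _ _ => measurableSet_singleton 0]
  rfl

lemma exists_ne_zero_sum_measure_birthGap_le_lt_one [IsFiniteMeasure P]
    (hmeas : ∀ u j, Measurable (X u j)) (hA1 : iIndepFun (fun j => X [] j) P)
    (hA3 : ∑' j : ℕ, ∏ i ∈ Finset.range (j + 1), P {ω | X [] i ω = 0} < 1) (m : ℕ) :
    ∃ δ ≠ 0, ∑ i ∈ Finset.range m, P {ω | birthGap X [] i ω ≤ δ} < 1 := by
  have hzero : ∑ i ∈ Finset.range m, P {ω | birthGap X [] i ω = 0} < 1 := by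
    simp_rw [measure_birthGap_eq_zero hA1]
    exact (ENNReal.sum_le_tsum _).trans_lt hA3
  have hlim (i : ℕ) : Tendsto (fun δ => P {ω | birthGap X [] i ω ≤ δ}) (𝓝[>] 0)
      (𝓝 (P {ω | birthGap X [] i ω = 0})) := by
    have hset : ⋂ δ > (0 : ℝ≥0∞), {ω | birthGap X [] i ω ≤ δ} =
        {ω | birthGap X [] i ω = 0} := by
      ext ω
      simp only [Set.mem_iInter, Set.mem_ofPred_eq]
      exact ⟨fun h => nonpos_iff_eq_zero.1 (le_of_forall_gt_imp_ge_of_dense h),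
        fun h _ _ => h ▸ zero_le⟩
    rw [← hset]
    exact tendsto_measure_biInter_gt
      (fun _ _ => (measurableSet_le (measurable_birthGap hmeas [] i)
        measurable_const).nullMeasurableSet)
      (fun _ _ _ hδ _ hω => le_trans hω hδ) ⟨1, one_pos, measure_ne_top _ _⟩
  obtain ⟨δ, hδ, hδpos⟩ := (((tendsto_finsetSum _ fun i _ => hlim i).eventually
    (gt_mem_nhds hzero)).and self_mem_nhdsWithin).exists
  exact ⟨δ, (Set.mem_Ioi.1 hδpos).ne', hδ⟩

lemma measure_birth_ofFn_le (hmeas : ∀ u j, Measurable (X u j))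
    (hnodes_indep : iIndepFun (fun u ω (j : ℕ) => X u j ω) P)
    (hnodes_ident : ∀ u : Node,
      Measure.map (fun ω (j : ℕ) => X u j ω) P = Measure.map (fun ω (j : ℕ) => X [] j ω) P)
    {k R : ℕ} (p : Fin k → ℕ) {C δ : ℝ≥0∞} (hC : C < R * δ) :
    P {ω | birth X (List.ofFn p) ω ≤ C} ≤
      ∑ T ∈ Finset.powersetCard (k - R) (Finset.univ : Finset (Fin k)),
        ∏ l ∈ T, P {ω | birthGap X [] (p l) ω ≤ δ} := by
  have hanc : Function.Injective fun l : Fin k => (List.ofFn p).drop (l + 1) := fun l l' h => by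
    have := congrArg List.length h
    simp only [List.length_drop, List.length_ofFn] at this
    omega
  calc P {ω | birth X (List.ofFn p) ω ≤ C}
      ≤ P (⋃ T ∈ Finset.powersetCard (k - R) (Finset.univ : Finset (Fin k)),
          ⋂ l ∈ T, {ω | birthGap X ((List.ofFn p).drop (l + 1)) (p l) ω ≤ δ}) := by
        refine measure_mono fun ω hω => ?_
        rw [Set.mem_ofPred_eq, birth_ofFn] at hω
        obtain ⟨T, -, hT, hle⟩ := exists_subset_card_eq_forall_le_of_sum_le hω hC
        simp only [Set.mem_iUnion, Set.mem_iInter, Finset.mem_powersetCard]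
        exact ⟨T, ⟨Finset.subset_univ T, by simpa using hT⟩, hle⟩
    _ ≤ ∑ T ∈ Finset.powersetCard (k - R) (Finset.univ : Finset (Fin k)),
          P (⋂ l ∈ T, {ω | birthGap X ((List.ofFn p).drop (l + 1)) (p l) ω ≤ δ}) :=
        measure_biUnion_finset_le _ _
    _ = _ := Finset.sum_congr rfl fun T _ =>
        measure_biInter_birthGap_le hmeas hnodes_indep hnodes_ident hanc p T δ

lemma measure_exists_birth_le_le (hmeas : ∀ u j, Measurable (X u j))
    (hnodes_indep : iIndepFun (fun u ω (j : ℕ) => X u j ω) P)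
    (hnodes_ident : ∀ u : Node,
      Measure.map (fun ω (j : ℕ) => X u j ω) P = Measure.map (fun ω (j : ℕ) => X [] j ω) P)
    (m n R : ℕ) {C δ : ℝ≥0∞} (hC : C < R * δ) :
    P {ω | ∃ u : Node, u.length = n + R ∧ (∀ i ∈ u, i < m) ∧ birth X u ω ≤ C} ≤
      ((n + R).choose R : ℝ≥0∞) *
        (∑ i ∈ Finset.range m, P {ω | birthGap X [] i ω ≤ δ}) ^ n * (m : ℝ≥0∞) ^ R := by
  set pr : ℕ → ℝ≥0∞ := fun i => P {ω | birthGap X [] i ω ≤ δ}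
  calc P {ω | ∃ u : Node, u.length = n + R ∧ (∀ i ∈ u, i < m) ∧ birth X u ω ≤ C}
      ≤ P (⋃ p : Fin (n + R) → Fin m, {ω | birth X (List.ofFn fun l => (p l : ℕ)) ω ≤ C}) := by
        refine measure_mono fun ω ⟨u, hk, hm, hu⟩ => Set.mem_iUnion.2
          ⟨fun l => ⟨u[(l : ℕ)]'(l.isLt.trans_eq hk.symm), hm _ (List.getElem_mem _)⟩, ?_⟩
        have hu' : List.ofFn (fun l : Fin (n + R) => u[(l : ℕ)]'(l.isLt.trans_eq hk.symm)) = u :=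
          List.ext_getElem (by simp [hk]) (by simp)
        simpa [hu'] using hu
    _ ≤ ∑ p : Fin (n + R) → Fin m, P {ω | birth X (List.ofFn fun l => (p l : ℕ)) ω ≤ C} :=
        measure_iUnion_fintype_le _ _
    _ ≤ ∑ p : Fin (n + R) → Fin m, ∑ T ∈ Finset.powersetCard n Finset.univ,
          ∏ l ∈ T, pr (p l) :=
        Finset.sum_le_sum fun p _ => by
          simpa using measure_birth_ofFn_le hmeas hnodes_indep hnodes_ident (fun l => (p l : ℕ)) hC
    _ = ∑ T ∈ Finset.powersetCard n (Finset.univ : Finset (Fin (n + R))),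
          (∑ j : Fin m, pr j) ^ n * (m : ℝ≥0∞) ^ R := by
        rw [Finset.sum_comm]
        refine Finset.sum_congr rfl fun T hT => ?_
        rw [sum_prod_comp_eq_pow_mul_pow (a := fun j : Fin m => pr j),
          (Finset.mem_powersetCard.1 hT).2]
        simp
    _ = _ := by
      rw [Finset.sum_const, Finset.card_powersetCard, Finset.card_univ, Fintype.card_fin,
        nsmul_eq_mul, Nat.choose_symm_add, mul_assoc, Fin.sum_univ_eq_sum_range pr]

lemma ae_exists_forall_lt_birth [IsFiniteMeasure P] (hmeas : ∀ u j, Measurable (X u j))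
    (hnodes_indep : iIndepFun (fun u ω (j : ℕ) => X u j ω) P)
    (hnodes_ident : ∀ u : Node,
      Measure.map (fun ω (j : ℕ) => X u j ω) P = Measure.map (fun ω (j : ℕ) => X [] j ω) P)
    (hA1 : iIndepFun (fun j => X [] j) P)
    (hA3 : ∑' j : ℕ, ∏ i ∈ Finset.range (j + 1), P {ω | X [] i ω = 0} < 1) (m C : ℕ) :
    ∀ᵐ ω ∂P, ∃ k, ∀ u : Node, u.length = k → (∀ i ∈ u, i < m) → (C : ℝ≥0∞) < birth X u ω := by
  obtain ⟨δ, hδ, hμ⟩ := exists_ne_zero_sum_measure_birthGap_le_lt_one hmeas hA1 hA3 m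
  obtain ⟨R, hR⟩ := ENNReal.exists_nat_mul_gt hδ (ENNReal.natCast_ne_top C)
  have hbound := ENNReal.Tendsto.mul_const (tendsto_choose_mul_pow_of_lt_one R hμ)
    (b := (m : ℝ≥0∞) ^ R) (Or.inr (ENNReal.pow_ne_top (ENNReal.natCast_ne_top m)))
  rw [zero_mul] at hbound
  rw [ae_iff]
  refine nonpos_iff_eq_zero.1 (ge_of_tendsto' hbound fun n => le_trans (measure_mono ?_)
    (measure_exists_birth_le_le hmeas hnodes_indep hnodes_ident m n R hR))
  intro ω hω
  push Not at hω
  exact hω (n + R)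

end Probability

/-- under Assumption A, almost surely the maximal out-degree in the
sequence of trees `(𝒯_{τ_n})_{n∈ℕ₀}` tends to infinity. -/
theorem maxDegree_tendsto_top
    (P : Measure Ω) [IsProbabilityMeasure P]
    (X : Node → ℕ → Ω → ℝ≥0∞)
    (hmeas : ∀ u j, Measurable (X u j))
    -- the sequences `(X(u ·))_u` are i.i.d. across nodes
    (hnodes_indep : iIndepFun
      (fun u ω (j : ℕ) => X u j ω) P)
    (hnodes_ident : ∀ u : Node,
      Measure.map (fun ω (j : ℕ) => X u j ω) P = Measure.map (fun ω (j : ℕ) => X [] j ω) P)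
    -- Assumption A (i): the waiting times `X_j` are mutually independent
    (hA1 : iIndepFun (fun j => X [] j) P)
    -- Assumption A (ii): `X_j < ∞` almost surely
    (hA2 : ∀ j : ℕ, ∀ᵐ ω ∂P, X [] j ω < ⊤)
    -- Assumption A (iii): `∑_{j=1}^∞ ∏_{i=1}^{j} P(X_i = 0) < 1`
    (hA3 : ∑' j : ℕ, ∏ i ∈ Finset.range (j + 1), P {ω | X [] i ω = 0} < 1) :
    ∀ᵐ ω ∂P, ∀ m : ℕ, ∀ᶠ n in atTop,
      (m : ℕ∞) ≤ ⨆ u ∈ jumpTree X n ω, deg (jumpTree X n ω) u := by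
  have hroot : ∀ᵐ ω ∂P, ∀ m : ℕ, birth X [m] ω ≠ ⊤ := by
    filter_upwards [ae_all_iff.2 hA2] with ω hω m
    rw [birth_cons]
    exact ENNReal.add_ne_top.2 ⟨ENNReal.zero_ne_top, ENNReal.sum_ne_top.2 fun j _ => (hω j).ne⟩
  have hpath := ae_all_iff.2 fun m => ae_all_iff.2
    (ae_exists_forall_lt_birth hmeas hnodes_indep hnodes_ident hA1 hA3 m)
  filter_upwards [hroot, hpath] with ω hrootω hpathω m
  exact eventually_le_maxDeg_jumpTree (hrootω m) (hpathω m)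

end CMJ
end

section
/- Let f : ℕ₀ → (0,∞) and suppose there is a constant C₀ > 0 such that f(i) ≤ C₀ (i+1) for all i ∈ ℕ₀. Then for every λ > 2C₀ one has ∑_{i=0}^∞ ∏_{j=0}^{i} f(j)/(f(j)+λ) < ∞. -/
/-!
Since `x ↦ x / (x + λ)` is increasing and `f j ≤ C₀ (j + 1)` with `λ > 2 C₀`, each factor is at most
`(j + 1) / (j + 3)`. These bounds telescope: `∏_{j<n} (j + 1) / (j + 3) = 2 / ((n + 1) (n + 2))`,
so the `i`-th term of the series is `O(1 / i²)`.
-/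

lemma div_add_le_div_add_two {x t c lam : ℝ} (hx : 0 ≤ x) (ht : 0 ≤ t) (hxt : x ≤ c * t)
    (hc : 2 * c ≤ lam) (hlam : 0 < lam) : x / (x + lam) ≤ t / (t + 2) := by
  rw [div_le_div_iff₀ (by positivity) (by positivity)]
  nlinarith

lemma prod_range_natCast_add_one_div_add_three (n : ℕ) :
    ∏ j ∈ Finset.range n, ((j : ℝ) + 1) / ((j : ℝ) + 3) = 2 / (((n : ℝ) + 1) * ((n : ℝ) + 2)) := by
  induction n with
  | zero => norm_num
  | succ n ih =>
    rw [Finset.prod_range_succ, ih]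
    push_cast
    field_simp
    ring

lemma prod_range_natCast_add_one_div_add_three_le (n : ℕ) :
    ∏ j ∈ Finset.range n, ((j : ℝ) + 1) / ((j : ℝ) + 3) ≤ 2 / ((n : ℝ) + 1) ^ 2 := by
  rw [prod_range_natCast_add_one_div_add_three, sq]
  gcongr
  linarith

theorem series_of_products_summable_general
    (f : ℕ → ℝ) (hf : ∀ i, 0 < f i)
    (C₀ : ℝ)
    (hbound : ∀ i : ℕ, f i ≤ C₀ * ((i : ℝ) + 1)) :
    ∀ lam : ℝ, 2 * C₀ < lam →
      Summable fun i : ℕ => ∏ j ∈ Finset.range (i + 1), f j / (f j + lam) := by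
  intro lam hlam
  have hC₀ : 0 < C₀ := by simpa using (hf 0).trans_le (hbound 0)
  have hlam₀ : 0 < lam := by linarith
  have hfactor (j : ℕ) : f j / (f j + lam) ≤ ((j : ℝ) + 1) / ((j : ℝ) + 3) := by
    convert div_add_le_div_add_two (hf j).le (by positivity) (hbound j) hlam.le hlam₀ using 2
    ring
  have hterm (i : ℕ) : ∏ j ∈ Finset.range (i + 1), f j / (f j + lam) ≤ 2 / ((i : ℝ) + 2) ^ 2 := by
    calc ∏ j ∈ Finset.range (i + 1), f j / (f j + lam)
        ≤ ∏ j ∈ Finset.range (i + 1), ((j : ℝ) + 1) / ((j : ℝ) + 3) :=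
          Finset.prod_le_prod (fun j _ => by have := hf j; positivity) fun j _ => hfactor j
      _ ≤ 2 / ((i : ℝ) + 2) ^ 2 := by
          convert prod_range_natCast_add_one_div_add_three_le (i + 1) using 3
          push_cast; ring
  have hmajorant : Summable fun i : ℕ => 2 / ((i : ℝ) + 2) ^ 2 := by
    simpa using summable_pow_div_add (2 : ℝ) 2 2 one_lt_two
  exact hmajorant.of_nonneg_of_le
    (fun i => Finset.prod_nonneg fun j _ => by have := hf j; positivity) hterm

theorem series_of_products_summable
    (f : ℕ → ℝ) (hf : ∀ i, 0 < f i)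
    (C₀ : ℝ) (hC₀ : 0 < C₀)
    (hbound : ∀ i : ℕ, f i ≤ C₀ * ((i : ℝ) + 1)) :
    ∀ lam : ℝ, 2 * C₀ < lam →
      Summable fun i : ℕ => ∏ j ∈ Finset.range (i + 1), f j / (f j + lam) :=
  series_of_products_summable_general f hf C₀ hbound
end
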